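/- arXiv:math/0305367 — 3 statements merged into one kernel-verified Lean document; each statement's English description precedes it below -/
import Mathlib

section
/- If 𝔭 = ℵ₁ then 𝔱 = ℵ₁. -/
open Cardinal

/-- `A ⊆* B`: `A \ B` is finite. -/
def StarSubset (A B : Set ℕ) : Prop := (A \ B).Finite

/-- A family of sets is centered if the intersection of every nonempty finite
subfamily is infinite (in particular every member is infinite). -/
def Centered (F : Set (Set ℕ)) : Prop :=
  ∀ G : Finset (Set ℕ), ↑G ⊆ F → G.Nonempty → (⋂ A ∈ G, A).Infinite

/-- `F` has a pseudo-intersection: an infinite `A` with `A ⊆* B` for all `B ∈ F`. -/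
def HasPseudoIntersection (F : Set (Set ℕ)) : Prop :=
  ∃ A : Set ℕ, A.Infinite ∧ ∀ B ∈ F, StarSubset A B

/-- `F` is a family of infinite sets linearly quasiordered by `⊆*`. -/
def LinQuasiOrdered (F : Set (Set ℕ)) : Prop :=
  (∀ A ∈ F, A.Infinite) ∧ ∀ A ∈ F, ∀ B ∈ F, StarSubset A B ∨ StarSubset B A

/-- The pseudo-intersection number 𝔭. -/
noncomputable def pNum : Cardinal :=
  sInf { c | ∃ F : Set (Set ℕ), Centered F ∧ ¬ HasPseudoIntersection F ∧ c = #F }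

/-- The tower number 𝔱. -/
noncomputable def tNum : Cardinal :=
  sInf { c | ∃ F : Set (Set ℕ), LinQuasiOrdered F ∧ ¬ HasPseudoIntersection F ∧ c = #F }

section Aux
open Set

lemma ss_refl (A : Set ℕ) : StarSubset A A := by simp [StarSubset]

lemma ss_of_subset {A B : Set ℕ} (h : A ⊆ B) : StarSubset A B := by
  simp [StarSubset, Set.diff_eq_empty.mpr h]

lemma ss_trans {A B C : Set ℕ} (h1 : StarSubset A B) (h2 : StarSubset B C) :
    StarSubset A C := by
  refine (h1.union h2).subset ?_
  intro x hx
  by_cases hxb : x ∈ B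
  · exact Or.inr ⟨hxb, hx.2⟩
  · exact Or.inl ⟨hx.1, hxb⟩

lemma ss_trans_sub {A B C : Set ℕ} (h1 : StarSubset A B) (h2 : B ⊆ C) :
    StarSubset A C := ss_trans h1 (ss_of_subset h2)

lemma prefix_min (e : ℕ → Set ℕ)
    (hch : ∀ i j, StarSubset (e i) (e j) ∨ StarSubset (e j) (e i)) (n : ℕ) :
    ∃ m, ∀ k ≤ n, StarSubset (e m) (e k) := by
  induction n with
  | zero => exact ⟨0, fun k hk => by rw [Nat.le_zero.mp hk]; exact ss_refl _⟩
  | succ n ih =>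
    obtain ⟨m, hm⟩ := ih
    rcases hch m (n + 1) with h | h
    · refine ⟨m, fun k hk => ?_⟩
      rcases Nat.lt_succ_iff_lt_or_eq.mp (Nat.lt_succ_of_le hk) with hk' | rfl
      · exact hm k (Nat.lt_succ_iff.mp hk')
      · exact h
    · refine ⟨n + 1, fun k hk => ?_⟩
      rcases Nat.lt_succ_iff_lt_or_eq.mp (Nat.lt_succ_of_le hk) with hk' | rfl
      · exact ss_trans h (hm k (Nat.lt_succ_iff.mp hk'))
      · exact ss_refl _

end Aux
section Step1
open Set

/-- prefix intersection -/
def Pfx (e : ℕ → Set ℕ) (n : ℕ) : Set ℕ := ⋂ k ∈ Finset.range (n + 1), e k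

lemma Pfx_subset (e : ℕ → Set ℕ) {k n : ℕ} (hk : k ≤ n) : Pfx e n ⊆ e k := by
  intro x hx
  exact Set.mem_iInter₂.mp hx k (Finset.mem_range.mpr (Nat.lt_succ_of_le hk))

lemma Pfx_antitone (e : ℕ → Set ℕ) {m n : ℕ} (h : m ≤ n) : Pfx e n ⊆ Pfx e m := by
  intro x hx
  exact Set.mem_iInter₂.mpr fun k hk => Set.mem_iInter₂.mp hx k
    (Finset.mem_range.mpr (lt_of_lt_of_le (Finset.mem_range.mp hk) (by omega)))

lemma diff_Pfx_finite (e : ℕ → Set ℕ) {m n : ℕ}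
    (hm : ∀ k ≤ n, StarSubset (e m) (e k)) : (e m \ Pfx e n).Finite := by
  have hsub : e m \ Pfx e n ⊆ ⋃ k ∈ Finset.range (n + 1), (e m \ e k) := by
    intro x hx
    have := hx.2
    rw [Pfx, Set.mem_iInter₂] at this
    push_neg at this
    obtain ⟨k, hk, hxk⟩ := this
    exact Set.mem_iUnion₂.mpr ⟨k, hk, hx.1, hxk⟩
  exact (Set.Finite.biUnion (Finset.range (n + 1)).finite_toSet
    (fun k hk => hm k (Nat.lt_succ_iff.mp (Finset.mem_range.mp hk)))).subset hsub

lemma Pfx_inter_infinite (e : ℕ → Set ℕ) {m n : ℕ} (hm : ∀ k ≤ n, StarSubset (e m) (e k))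
    {Z : Set ℕ} (hZ : (e m ∩ Z).Infinite) : (Pfx e n ∩ Z).Infinite := by
  refine (hZ.diff (diff_Pfx_finite e hm)).mono ?_
  rintro x ⟨⟨hxm, hxZ⟩, hxj⟩
  exact ⟨by_contra fun hc => hxj ⟨hxm, fun hP => hc hP⟩, hxZ⟩

/-- Core diagonal construction along a countable chain, with built-in domination. -/
lemma step1 {S : Set (Set ℕ)} (hSc : S.Countable) (hSinf : ∀ s ∈ S, s.Infinite)
    (hSchain : ∀ a ∈ S, ∀ b ∈ S, StarSubset a b ∨ StarSubset b a) (f : ℕ → ℕ) :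
    ∃ B : Set ℕ, B.Infinite ∧ (∀ s ∈ S, StarSubset B s) ∧
      ∀ x ∈ B, ∀ y ∈ B, x < y → f x < y := by
  classical
  obtain ⟨e, he⟩ := (hSc.insert Set.univ).exists_eq_range (Set.insert_nonempty _ _)
  have heS : ∀ k, e k = Set.univ ∨ e k ∈ S := fun k => by
    have : e k ∈ insert Set.univ S := he ▸ Set.mem_range_self k
    simpa using this
  have hchain : ∀ i j, StarSubset (e i) (e j) ∨ StarSubset (e j) (e i) := by
    intro i j
    rcases heS i with h | h
    · exact Or.inr (ss_of_subset (by rw [h]; exact Set.subset_univ _))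
    rcases heS j with h' | h'
    · exact Or.inl (ss_of_subset (by rw [h']; exact Set.subset_univ _))
    · exact hSchain _ h _ h'
  have hPinf : ∀ n, (Pfx e n).Infinite := by
    intro n
    obtain ⟨m, hm⟩ := prefix_min e hchain n
    have hem : (e m).Infinite := by
      rcases heS m with h | h
      · rw [h]; exact Set.infinite_univ
      · exact hSinf _ h
    have := Pfx_inter_infinite e hm (Z := Set.univ) (by simpa using hem)
    simpa using this
  have hpick : ∀ n m : ℕ, ∃ x, x ∈ Pfx e n ∧ m < x := fun n m => by
    obtain ⟨b, hb, hb'⟩ := (hPinf n).exists_gt m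
    exact ⟨b, hb, hb'⟩
  choose pick pickP pickGt using hpick
  let b : ℕ → ℕ := fun k =>
    Nat.rec (pick 0 0) (fun k bk => pick (k + 1) (max bk (f bk))) k
  have hbP : ∀ k, b k ∈ Pfx e k := by
    intro k
    cases k with
    | zero => exact pickP 0 0
    | succ k => exact pickP (k + 1) _
  have hmono : StrictMono b :=
    strictMono_nat_of_lt_succ fun k => lt_of_le_of_lt (le_max_left _ _) (pickGt _ _)
  have hfb : ∀ k, f (b k) < b (k + 1) := fun k =>
    lt_of_le_of_lt (le_max_right _ _) (pickGt _ _)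
  refine ⟨Set.range b, Set.infinite_range_of_injective hmono.injective, ?_, ?_⟩
  · intro s hs
    obtain ⟨k, hk⟩ : ∃ k, e k = s := by
      have : s ∈ Set.range e := he ▸ Set.mem_insert_of_mem _ hs
      exact this
    have hsub : Set.range b \ s ⊆ b '' {j | j < k} := by
      rintro x ⟨⟨j, rfl⟩, hxs⟩
      rcases lt_or_ge j k with hj | hj
      · exact ⟨j, hj, rfl⟩
      · exact absurd (hk ▸ (Pfx_subset e (le_refl k) (Pfx_antitone e hj (hbP j)))) hxs
    exact ((Set.finite_Iio k).image b).subset hsub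
  · rintro x ⟨i, rfl⟩ y ⟨j, rfl⟩ hlt
    have hij : i < j := hmono.lt_iff_lt.mp hlt
    exact lt_of_lt_of_le (hfb i) (hmono.monotone hij)

end Step1
section Step2
open Set

/-- `m` is compatible with the centered family `F`. -/
def Compat (F : Set (Set ℕ)) (m : Set ℕ) : Prop :=
  ∀ G : Finset (Set ℕ), ↑G ⊆ F → (m ∩ ⋂ A ∈ G, A).Infinite

lemma Compat.infinite {F : Set (Set ℕ)} {m : Set ℕ} (h : Compat F m) : m.Infinite := by
  have := h ∅ (by simp)
  simpa using this

lemma compat_univ {F : Set (Set ℕ)} (hF : Centered F) : Compat F Set.univ := by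
  intro G hG
  rcases G.eq_empty_or_nonempty with rfl | hne
  · simpa using Set.infinite_univ
  · simpa using hF G hG hne

lemma step2 {F : Set (Set ℕ)} (hF : Centered F)
    (hb : ∀ gf : {G : Finset (Set ℕ) // ↑G ⊆ F} → ℕ → ℕ,
      ∃ g : ℕ → ℕ, ∀ i, ∃ N, ∀ n ≥ N, gf i n ≤ g n)
    {S : Set (Set ℕ)} (hSc : S.Countable) (hScomp : ∀ s ∈ S, Compat F s)
    (hSchain : ∀ a ∈ S, ∀ b ∈ S, StarSubset a b ∨ StarSubset b a)
    {W : Set (Set ℕ)} (hWc : W.Countable) (hWF : W ⊆ F) :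
    ∃ B : Set ℕ, Compat F B ∧ (∀ s ∈ S, StarSubset B s) ∧ ∀ w ∈ W, StarSubset B w := by
  classical
  obtain ⟨e, he⟩ := (hSc.insert Set.univ).exists_eq_range (Set.insert_nonempty _ _)
  obtain ⟨c, hc⟩ := (hWc.insert Set.univ).exists_eq_range (Set.insert_nonempty _ _)
  have heS : ∀ k, e k = Set.univ ∨ e k ∈ S := fun k => by
    have : e k ∈ insert Set.univ S := he ▸ Set.mem_range_self k
    simpa using this
  have hcW : ∀ k, c k = Set.univ ∨ c k ∈ W := fun k => by
    have : c k ∈ insert Set.univ W := hc ▸ Set.mem_range_self k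
    simpa using this
  have hecomp : ∀ k, Compat F (e k) := fun k => by
    rcases heS k with h | h
    · rw [h]; exact compat_univ hF
    · exact hScomp _ h
  have hchain : ∀ i j, StarSubset (e i) (e j) ∨ StarSubset (e j) (e i) := by
    intro i j
    rcases heS i with h | h
    · exact Or.inr (ss_of_subset (by rw [h]; exact Set.subset_univ _))
    rcases heS j with h' | h'
    · exact Or.inl (ss_of_subset (by rw [h']; exact Set.subset_univ _))
    · exact hSchain _ h _ h'
  -- the decreasing sequence
  set D : ℕ → Set ℕ := fun n => Pfx e n ∩ Pfx c n with hD
  have hDanti : ∀ {m n : ℕ}, m ≤ n → D n ⊆ D m := fun {m n} h x hx =>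
    ⟨Pfx_antitone e h hx.1, Pfx_antitone c h hx.2⟩
  -- key positivity
  have hDpos : ∀ n, ∀ G : Finset (Set ℕ), ↑G ⊆ F → (D n ∩ ⋂ A ∈ G, A).Infinite := by
    intro n G hG
    obtain ⟨m, hm⟩ := prefix_min e hchain n
    set H : Finset (Set ℕ) :=
      ((Finset.range (n + 1)).image c).filter (· ∈ F) ∪ G with hH
    have hHF : ↑H ⊆ F := by
      intro A hA
      rw [hH] at hA
      simp only [Finset.coe_union, Set.mem_union, Finset.coe_filter, Set.mem_setOf_eq] at hA
      rcases hA with ⟨_, h2⟩ | hA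
      · exact h2
      · exact hG hA
    have hkey : (e m ∩ (Pfx c n ∩ ⋂ A ∈ G, A)).Infinite := by
      refine ((hecomp m) H hHF).mono ?_
      rintro x ⟨hxm, hxH⟩
      rw [Set.mem_iInter₂] at hxH
      refine ⟨hxm, ?_, ?_⟩
      · rw [Pfx, Set.mem_iInter₂]
        intro j hj
        rcases hcW j with h | h
        · rw [h]; trivial
        · refine hxH (c j) ?_
          rw [hH]
          refine Finset.mem_union_left _ ?_
          rw [Finset.mem_filter]
          exact ⟨Finset.mem_image_of_mem c hj, by simpa using hWF h⟩
      · rw [Set.mem_iInter₂]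
        intro A hA
        exact hxH A (by rw [hH]; exact Finset.mem_union_right _ hA)
    have := Pfx_inter_infinite e hm hkey
    refine this.mono ?_
    rintro x ⟨hx1, hx2, hx3⟩
    exact ⟨⟨hx1, hx2⟩, hx3⟩
  -- choose witnesses above n
  have hpick : ∀ (i : {G : Finset (Set ℕ) // ↑G ⊆ F}) (n : ℕ),
      ∃ x, x ∈ D n ∩ ⋂ A ∈ i.1, A ∧ n < x := fun i n => by
    obtain ⟨x, hx, hx'⟩ := (hDpos n i.1 i.2).exists_gt n
    exact ⟨x, hx, hx'⟩
  choose pick pickMem pickGt using hpick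
  obtain ⟨g, hg⟩ := hb pick
  -- the diagonal set
  set B : Set ℕ := ⋃ n, D n ∩ Set.Ioc n (g n) with hB
  have hBD : ∀ m, StarSubset B (D m) := by
    intro m
    have hsub : B \ D m ⊆ ⋃ n ∈ Finset.range m, Set.Ioc n (g n) := by
      rintro x ⟨hxB, hxD⟩
      rw [hB, Set.mem_iUnion] at hxB
      obtain ⟨n, hn1, hn2⟩ := hxB
      rcases lt_or_ge n m with hnm | hnm
      · exact Set.mem_iUnion₂.mpr ⟨n, Finset.mem_range.mpr hnm, hn2⟩
      · exact absurd (hDanti hnm hn1) hxD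
    exact (Set.Finite.biUnion (Finset.range m).finite_toSet
      (fun k _ => Set.finite_Ioc k (g k))).subset hsub
  have hBcomp : Compat F B := by
    intro G hG
    refine Set.infinite_of_forall_exists_gt ?_
    intro a
    obtain ⟨N, hN⟩ := hg ⟨G, hG⟩
    set n := max N (a + 1) with hn
    refine ⟨pick ⟨G, hG⟩ n, ⟨?_, ?_⟩, ?_⟩
    · rw [hB, Set.mem_iUnion]
      refine ⟨n, (pickMem ⟨G, hG⟩ n).1, pickGt ⟨G, hG⟩ n, hN n (le_max_left _ _)⟩
    · exact (pickMem ⟨G, hG⟩ n).2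
    · exact lt_of_lt_of_le (by omega) (le_of_lt (pickGt ⟨G, hG⟩ n))
  refine ⟨B, hBcomp, ?_, ?_⟩
  · intro s hs
    obtain ⟨k, hk⟩ : ∃ k, e k = s := by
      have : s ∈ Set.range e := he ▸ Set.mem_insert_of_mem _ hs
      exact this
    exact ss_trans_sub (hBD k) (fun x hx => hk ▸ Pfx_subset e (le_refl k) hx.1)
  · intro w hw
    obtain ⟨k, hk⟩ : ∃ k, c k = w := by
      have : w ∈ Set.range c := hc ▸ Set.mem_insert_of_mem _ hw
      exact this
    exact ss_trans_sub (hBD k) (fun x hx => hk ▸ Pfx_subset c (le_refl k) hx.2)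

end Step2
section Engine

theorem engine {ι : Type} [LinearOrder ι]
    (hwf : WellFounded ((· < ·) : ι → ι → Prop)) (Q : ι → Set ℕ → Prop)
    (hstep : ∀ (x : ι) (T : ι → Set ℕ),
        (∀ y, y < x → Q y (T y) ∧ ∀ z, z < y → StarSubset (T y) (T z)) →
        ∃ B, Q x B ∧ ∀ y, y < x → StarSubset B (T y)) :
    ∃ T : ι → Set ℕ, ∀ x, Q x (T x) ∧ ∀ z, z < x → StarSubset (T x) (T z) := by
  classical
  set body : ∀ x : ι, (∀ y, y < x → Set ℕ) → Set ℕ := fun x ih =>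
    if h : ∀ y, y < x → Q y (if hy : y < x then ih y hy else ∅) ∧
        ∀ z, z < y → StarSubset (if hy : y < x then ih y hy else ∅)
          (if hz : z < x then ih z hz else ∅)
    then (hstep x (fun y => if hy : y < x then ih y hy else ∅) h).choose
    else ∅ with hbody
  set T : ι → Set ℕ := hwf.fix body with hT
  have hfix : ∀ x, T x = body x fun y _ => T y := fun x => hwf.fix_eq body x
  refine ⟨T, ?_⟩
  intro x
  induction x using hwf.induction with
  | _ x ih =>
    have hTp : (fun y => if hy : y < x then T y else ∅) = fun y =>
        if hy : y < x then (fun y (_ : y < x) => T y) y hy else ∅ := rfl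
    have hcond : ∀ y, y < x →
        Q y (if hy : y < x then T y else ∅) ∧
        ∀ z, z < y → StarSubset (if hy : y < x then T y else ∅)
          (if hz : z < x then T z else ∅) := by
      intro y hy
      rw [dif_pos hy]
      refine ⟨(ih y hy).1, fun z hz => ?_⟩
      rw [dif_pos (lt_trans hz hy)]
      exact (ih y hy).2 z hz
    have hx : T x = (hstep x (fun y => if hy : y < x then T y else ∅) hcond).choose := by
      rw [hfix x, hbody]
      exact dif_pos hcond
    have hspec := (hstep x (fun y => if hy : y < x then T y else ∅) hcond).choose_spec
    rw [← hx] at hspec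
    refine ⟨hspec.1, fun z hz => ?_⟩
    have := hspec.2 z hz
    rwa [dif_pos hz] at this

end Engine
section Bounded
open Set

def Dom (B : Set ℕ) (f : ℕ → ℕ) : Prop :=
  ∃ N, ∀ x ∈ B, ∀ y ∈ B, N ≤ x → x < y → f x < y

lemma dom_mono {B X : Set ℕ} (f : ℕ → ℕ) (hX : StarSubset X B) (h : Dom B f) :
    Dom X f := by
  obtain ⟨N, hN⟩ := h
  obtain ⟨M, hM⟩ := hX.bddAbove
  simp only [mem_upperBounds] at hM
  refine ⟨max N (M + 1), fun x hx y hy hNx hxy => ?_⟩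
  have hxB : x ∈ B := by
    by_contra hc
    have := hM x ⟨hx, hc⟩
    omega
  have hyB : y ∈ B := by
    by_contra hc
    have := hM y ⟨hy, hc⟩
    omega
  exact hN x hxB y hyB (le_trans (le_max_left _ _) hNx) hxy

lemma mk_omega1 : #((Cardinal.aleph 1).ord.ToType) = Cardinal.aleph 1 := by
  rw [Cardinal.mk_toType, Cardinal.card_ord]

lemma seg_countable (x : (Cardinal.aleph 1).ord.ToType) : {y | y < x}.Countable :=
  (Cardinal.countable_iff_lt_aleph_one _).mpr (Cardinal.mk_Iio_ord_toType x)

lemma bounded_of_t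
    (ht : ∀ G : Set (Set ℕ), LinQuasiOrdered G → #G ≤ Cardinal.aleph 1 →
      HasPseudoIntersection G)
    {I : Type} (hI : #I ≤ Cardinal.aleph 1) (f : I → ℕ → ℕ) :
    ∃ g : ℕ → ℕ, ∀ i, ∃ N, ∀ n ≥ N, f i n ≤ g n := by
  classical
  set ι := (Cardinal.aleph 1).ord.ToType with hι
  have hcard : #I ≤ #ι := by rw [mk_omega1]; exact hI
  obtain ⟨emb⟩ := (Cardinal.le_def _ _).mp hcard
  set fm : I → ℕ → ℕ := fun i n => (Finset.range (n + 1)).sup (f i) with hfm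
  have hfm_le : ∀ i n, f i n ≤ fm i n := fun i n =>
    Finset.le_sup (Finset.self_mem_range_succ n)
  have hfm_mono : ∀ i, Monotone (fm i) := fun i a b hab =>
    Finset.sup_mono (Finset.range_subset_range.mpr (by omega))
  set f' : ι → ℕ → ℕ := fun x =>
    if h : ∃ i, emb i = x then fm h.choose else fun _ => 0 with hf'
  set Q : ι → Set ℕ → Prop := fun x B => B.Infinite ∧ Dom B (f' x) with hQ
  have hstep : ∀ (x : ι) (T : ι → Set ℕ),
      (∀ y, y < x → Q y (T y) ∧ ∀ z, z < y → StarSubset (T y) (T z)) →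
      ∃ B, Q x B ∧ ∀ y, y < x → StarSubset B (T y) := by
    intro x T hT
    have hSc : (T '' {y | y < x}).Countable := (seg_countable x).image T
    have hSinf : ∀ s ∈ T '' {y | y < x}, s.Infinite := by
      rintro s ⟨y, hy, rfl⟩
      exact (hT y hy).1.1
    have hSchain : ∀ a ∈ T '' {y | y < x}, ∀ b ∈ T '' {y | y < x},
        StarSubset a b ∨ StarSubset b a := by
      rintro a ⟨y, hy, rfl⟩ b ⟨z, hz, rfl⟩
      rcases lt_trichotomy y z with h | rfl | h
      · exact Or.inr ((hT z hz).2 y h)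
      · exact Or.inl (ss_refl _)
      · exact Or.inl ((hT y hy).2 z h)
    obtain ⟨B, hBinf, hBS, hBdom⟩ := step1 hSc hSinf hSchain (f' x)
    exact ⟨B, ⟨hBinf, 0, fun a ha b hb _ hab => hBdom a ha b hb hab⟩,
      fun y hy => hBS _ ⟨y, hy, rfl⟩⟩
  obtain ⟨T, hT⟩ := engine wellFounded_lt Q hstep
  have hG : LinQuasiOrdered (Set.range T) := by
    constructor
    · rintro A ⟨x, rfl⟩
      exact (hT x).1.1
    · rintro A ⟨x, rfl⟩ B ⟨y, rfl⟩
      rcases lt_trichotomy x y with h | rfl | h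
      · exact Or.inr ((hT y).2 x h)
      · exact Or.inl (ss_refl _)
      · exact Or.inl ((hT x).2 y h)
  have hGcard : #(Set.range T) ≤ Cardinal.aleph 1 :=
    le_trans Cardinal.mk_range_le (le_of_eq mk_omega1)
  obtain ⟨X, hXinf, hX⟩ := ht (Set.range T) hG hGcard
  have hXdom : ∀ x : ι, Dom X (f' x) := fun x =>
    dom_mono _ (hX _ ⟨x, rfl⟩) (hT x).1.2
  have hpick : ∀ n : ℕ, ∃ m, m ∈ X ∧ n < m := fun n => by
    obtain ⟨b, hb, hb'⟩ := hXinf.exists_gt n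
    exact ⟨b, hb, hb'⟩
  choose nxt nxtX nxtGt using hpick
  refine ⟨fun n => nxt (nxt n), fun i => ?_⟩
  obtain ⟨N, hN⟩ := hXdom (emb i)
  have hfi : f' (emb i) = fm i := by
    have hex : ∃ j, emb j = emb i := ⟨i, rfl⟩
    rw [hf']
    simp only [dif_pos hex]
    exact congrArg fm (emb.injective hex.choose_spec)
  refine ⟨N, fun n hn => ?_⟩
  have h1 : N ≤ nxt n := le_trans hn (le_of_lt (nxtGt n))
  have h2 := hN (nxt n) (nxtX n) (nxt (nxt n)) (nxtX (nxt n)) h1 (nxtGt (nxt n))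
  rw [hfi] at h2
  exact le_of_lt (lt_of_le_of_lt
    (le_trans (hfm_le i n) (hfm_mono i (le_of_lt (nxtGt n)))) h2)

end Bounded
section Main
open Set

lemma finsub_card {F : Set (Set ℕ)} (hF : #F = Cardinal.aleph 1) :
    #{G : Finset (Set ℕ) // ↑G ⊆ F} ≤ Cardinal.aleph 1 := by
  classical
  have hinf : Infinite ↥F := by
    rw [Cardinal.infinite_iff, hF]
    exact le_of_lt Cardinal.aleph0_lt_aleph_one
  set φ : {G : Finset (Set ℕ) // ↑G ⊆ F} → Finset ↥F := fun p => p.1.attach.map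
    ⟨fun x => ⟨x.1, p.2 x.2⟩, fun a b hab => Subtype.ext (by simpa using hab)⟩ with hφdef
  have hφ : Function.Injective φ := by
    intro p q hpq
    apply Subtype.ext
    ext a
    constructor
    · intro ha
      have h1 : (⟨a, p.2 ha⟩ : ↥F) ∈ φ p := by
        rw [hφdef]
        exact Finset.mem_map_of_mem _ (Finset.mem_attach _ ⟨a, ha⟩)
      rw [hpq, hφdef] at h1
      obtain ⟨x, _, hxa⟩ := Finset.mem_map.mp h1
      have hxa' : x.1 = a := congrArg Subtype.val hxa
      exact hxa' ▸ x.2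
    · intro ha
      have h1 : (⟨a, q.2 ha⟩ : ↥F) ∈ φ q := by
        rw [hφdef]
        exact Finset.mem_map_of_mem _ (Finset.mem_attach _ ⟨a, ha⟩)
      rw [← hpq, hφdef] at h1
      obtain ⟨x, _, hxa⟩ := Finset.mem_map.mp h1
      have hxa' : x.1 = a := congrArg Subtype.val hxa
      exact hxa' ▸ x.2
  calc #{G : Finset (Set ℕ) // ↑G ⊆ F} ≤ #(Finset ↥F) := Cardinal.mk_le_of_injective hφ
    _ = #↥F := Cardinal.mk_finset_of_infinite _
    _ = Cardinal.aleph 1 := hF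

/-- If 𝔭 = ℵ₁ then 𝔱 = ℵ₁. -/
theorem stmt4 (h : pNum = Cardinal.aleph 1) : tNum = Cardinal.aleph 1 := by
  classical
  set St := {c | ∃ F : Set (Set ℕ), LinQuasiOrdered F ∧ ¬ HasPseudoIntersection F ∧ c = #F}
    with hSt
  -- extract the witness for p
  rw [pNum] at h
  have hSp : {c | ∃ F : Set (Set ℕ), Centered F ∧ ¬ HasPseudoIntersection F ∧ c = #F}.Nonempty := by
    by_contra hc
    rw [Set.not_nonempty_iff_eq_empty] at hc
    rw [hc, Cardinal.sInf_empty] at h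
    exact absurd h.symm
      (ne_of_gt (lt_of_le_of_lt (Cardinal.zero_le _) Cardinal.aleph0_lt_aleph_one))
  obtain ⟨F, hFc, hFnoPI, hceq⟩ := csInf_mem hSp
  have hFcard : #F = Cardinal.aleph 1 := by rw [← hceq]; exact h
  -- lower bound for t
  have hlower : ∀ c ∈ St, Cardinal.aleph 1 ≤ c := by
    rintro c ⟨G, hG, hGnoPI, rfl⟩
    by_contra hlt
    have hGc : G.Countable :=
      (Cardinal.countable_iff_lt_aleph_one G).mpr (not_le.mp hlt)
    obtain ⟨B, hBinf, hBS, _⟩ := step1 hGc hG.1 hG.2 (fun _ => 0)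
    exact hGnoPI ⟨B, hBinf, hBS⟩
  -- upper bound for t
  have hupper : ∃ c ∈ St, c ≤ Cardinal.aleph 1 := by
    by_contra hcon
    push_neg at hcon
    have ht : ∀ G : Set (Set ℕ), LinQuasiOrdered G → #G ≤ Cardinal.aleph 1 →
        HasPseudoIntersection G := by
      intro G hG hGcard
      by_contra hnoPI
      exact absurd hGcard (not_le.mpr (hcon _ ⟨G, hG, hnoPI, rfl⟩))
    -- the main transfinite construction
    have hb : ∀ gf : {G : Finset (Set ℕ) // ↑G ⊆ F} → ℕ → ℕ,
        ∃ g : ℕ → ℕ, ∀ i, ∃ N, ∀ n ≥ N, gf i n ≤ g n :=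
      fun gf => bounded_of_t ht (finsub_card hFcard) gf
    have hmkι : #F = #((Cardinal.aleph 1).ord.ToType) := by rw [mk_omega1]; exact hFcard
    obtain ⟨eqv⟩ := Cardinal.eq.mp hmkι
    set A : (Cardinal.aleph 1).ord.ToType → Set ℕ := fun x => (eqv.symm x).1 with hA
    have hAF : ∀ x, A x ∈ F := fun x => (eqv.symm x).2
    set Q : (Cardinal.aleph 1).ord.ToType → Set ℕ → Prop :=
      fun x B => Compat F B ∧ StarSubset B (A x) with hQ
    have hstep : ∀ (x : (Cardinal.aleph 1).ord.ToType)
        (T : (Cardinal.aleph 1).ord.ToType → Set ℕ),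
        (∀ y, y < x → Q y (T y) ∧ ∀ z, z < y → StarSubset (T y) (T z)) →
        ∃ B, Q x B ∧ ∀ y, y < x → StarSubset B (T y) := by
      intro x T hT
      have hSc : (T '' {y | y < x}).Countable := (seg_countable x).image T
      have hScomp : ∀ s ∈ T '' {y | y < x}, Compat F s := by
        rintro s ⟨y, hy, rfl⟩
        exact (hT y hy).1.1
      have hSchain : ∀ a ∈ T '' {y | y < x}, ∀ b ∈ T '' {y | y < x},
          StarSubset a b ∨ StarSubset b a := by
        rintro a ⟨y, hy, rfl⟩ b ⟨z, hz, rfl⟩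
        rcases lt_trichotomy y z with hyz | rfl | hyz
        · exact Or.inr ((hT z hz).2 y hyz)
        · exact Or.inl (ss_refl _)
        · exact Or.inl ((hT y hy).2 z hyz)
      have hWc : ({A x} : Set (Set ℕ)).Countable := Set.countable_singleton _
      have hWF : ({A x} : Set (Set ℕ)) ⊆ F := by
        rintro w rfl
        exact hAF x
      obtain ⟨B, hBcomp, hBS, hBW⟩ := step2 hFc hb hSc hScomp hSchain hWc hWF
      exact ⟨B, ⟨hBcomp, hBW _ rfl⟩, fun y hy => hBS _ ⟨y, hy, rfl⟩⟩
    obtain ⟨T, hT⟩ := engine wellFounded_lt Q hstep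
    have hGlin : LinQuasiOrdered (Set.range T) := by
      constructor
      · rintro B ⟨x, rfl⟩
        exact (hT x).1.1.infinite
      · rintro B ⟨x, rfl⟩ C ⟨y, rfl⟩
        rcases lt_trichotomy x y with hxy | rfl | hxy
        · exact Or.inr ((hT y).2 x hxy)
        · exact Or.inl (ss_refl _)
        · exact Or.inl ((hT x).2 y hxy)
    have hGcard : #(Set.range T) ≤ Cardinal.aleph 1 :=
      le_trans Cardinal.mk_range_le (le_of_eq mk_omega1)
    obtain ⟨X, hXinf, hX⟩ := ht (Set.range T) hGlin hGcard
    refine hFnoPI ⟨X, hXinf, ?_⟩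
    intro B hB
    have hBA : A (eqv ⟨B, hB⟩) = B := by
      rw [hA]
      simp
    have := ss_trans (hX _ ⟨eqv ⟨B, hB⟩, rfl⟩) (hT (eqv ⟨B, hB⟩)).1.2
    rwa [hBA] at this
  obtain ⟨c, hcSt, hcle⟩ := hupper
  have h1 : Cardinal.aleph 1 ≤ sInf St := le_csInf ⟨c, hcSt⟩ hlower
  have h2 : sInf St ≤ c := csInf_le' hcSt
  rw [tNum]
  exact le_antisymm (h2.trans hcle) h1

end Main
end

section
/- 𝔭* ≤ 𝔡, where 𝔡 is the dominating number. -/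
open Cardinal

/-- `F` is linearly refinable: each `A ∈ F` has an infinite subset `Â ⊆ A`
such that the family of the `Â`'s is linearly `⊆*`-quasiordered. -/
def LinearlyRefinable (F : Set (Set ℕ)) : Prop :=
  ∃ r : Set ℕ → Set ℕ, (∀ A ∈ F, r A ⊆ A ∧ (r A).Infinite) ∧
    LinQuasiOrdered (r '' F)

/-- The cardinal 𝔭*: minimal cardinality of a centered family of infinite subsets
of ℕ which is not linearly refinable. -/
noncomputable def pStar : Cardinal :=
  sInf { c | ∃ F : Set (Set ℕ), Centered F ∧ ¬ LinearlyRefinable F ∧ c = #F }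

/-- `g` eventually dominates `f`. -/
def EvDominates (g f : ℕ → ℕ) : Prop := ∀ᶠ n in Filter.atTop, f n ≤ g n

/-- The dominating number 𝔡. -/
noncomputable def dNum : Cardinal :=
  sInf { c | ∃ D : Set (ℕ → ℕ), (∀ f : ℕ → ℕ, ∃ g ∈ D, EvDominates g f) ∧ c = #D }

namespace PStarAux

open Set

/-- `dhat d` : a strictly increasing majorant of `d`. -/
def dhat (d : ℕ → ℕ) (k : ℕ) : ℕ := (Finset.range (k + 1)).sup d + k

lemma dhat_mono (d : ℕ → ℕ) : Monotone (dhat d) := by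
  intro a b hab
  unfold dhat
  exact Nat.add_le_add (Finset.sup_mono (Finset.range_subset_range.2 (by omega))) hab

lemma le_dhat_self (d : ℕ → ℕ) (k : ℕ) : k ≤ dhat d k := Nat.le_add_left k _

lemma d_le_dhat (d : ℕ → ℕ) (k : ℕ) : d k ≤ dhat d k :=
  le_trans (Finset.le_sup (by simp)) (Nat.le_add_right _ _)

/-- `gD d` : a nondecreasing unbounded function whose "inverse" dominates `d`. -/
def gD (d : ℕ → ℕ) (j : ℕ) : ℕ := ((Finset.range j).filter (fun k => dhat d k < j)).card

lemma gD_lt (d : ℕ → ℕ) (k m : ℕ) (h : m + 1 ≤ gD d k) : dhat d m < k := by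
  by_contra hc
  push_neg at hc
  have hsub : (Finset.range k).filter (fun i => dhat d i < k) ⊆ Finset.range m := by
    intro i hi
    simp only [Finset.mem_filter, Finset.mem_range] at *
    by_contra him
    push_neg at him
    have := dhat_mono d him
    omega
  have := Finset.card_le_card hsub
  simp only [Finset.card_range] at this
  unfold gD at h
  omega

lemma gD_mono (d : ℕ → ℕ) : Monotone (gD d) := by
  intro a b hab
  apply Finset.card_le_card
  intro i hi
  simp only [Finset.mem_filter, Finset.mem_range] at *
  omega

lemma gD_unbounded (d : ℕ → ℕ) (m : ℕ) : m + 1 ≤ gD d (dhat d m + 1) := by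
  have hsub : Finset.range (m + 1) ⊆
      (Finset.range (dhat d m + 1)).filter (fun k => dhat d k < dhat d m + 1) := by
    intro i hi
    simp only [Finset.mem_filter, Finset.mem_range] at *
    have h1 := dhat_mono d (show i ≤ m by omega)
    have h2 := le_dhat_self d i
    omega
  have := Finset.card_le_card hsub
  simpa [Finset.card_range, gD] using this

/-- below-graph set, coded into `ℕ` by `Nat.pair`. -/
def AS (g : ℕ → ℕ) : Set ℕ := {x | (Nat.unpair x).2 ≤ g (Nat.unpair x).1}

/-- corner set `[n,∞) × [n,∞)`, coded. -/
def VS (n : ℕ) : Set ℕ := {x | n ≤ (Nat.unpair x).1 ∧ n ≤ (Nat.unpair x).2}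

lemma VS_anti {n m : ℕ} (h : n ≤ m) : VS m ⊆ VS n :=
  fun _ hx => ⟨le_trans h hx.1, le_trans h hx.2⟩

/-- The witness family. -/
def Fam (D0 : Set (ℕ → ℕ)) : Set (Set ℕ) := ((fun d => AS (gD d)) '' D0) ∪ (Set.range VS)

lemma ss_refl (X : Set ℕ) : StarSubset X X := by
  simp [StarSubset]

lemma ss_trans {X Y Z : Set ℕ} (h1 : StarSubset X Y) (h2 : StarSubset Y Z) : StarSubset X Z := by
  apply (h1.union h2).subset
  intro x hx
  by_cases h : x ∈ Y
  · exact Or.inr ⟨h, hx.2⟩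
  · exact Or.inl ⟨hx.1, h⟩

lemma centered_Fam (D0 : Set (ℕ → ℕ)) : Centered (Fam D0) := by
  classical
  intro G hG _hne
  have hQ : ∀ A ∈ G, ∃ n : ℕ, ∀ m, n ≤ m → ∃ c, ∀ k, c ≤ k → Nat.pair k m ∈ A := by
    intro A hA
    rcases hG hA with ⟨d, _, rfl⟩ | ⟨n, rfl⟩
    · refine ⟨0, fun m _ => ⟨dhat d m + 1, fun k hk => ?_⟩⟩
      show (Nat.unpair _).2 ≤ gD d (Nat.unpair _).1
      rw [Nat.unpair_pair]
      exact le_trans (le_trans (Nat.le_succ m) (gD_unbounded d m)) (gD_mono d hk)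
    · refine ⟨n, fun m hm => ⟨n, fun k hk => ?_⟩⟩
      show n ≤ (Nat.unpair _).1 ∧ n ≤ (Nat.unpair _).2
      rw [Nat.unpair_pair]
      exact ⟨hk, hm⟩
  have combo : ∀ (H : Finset (Set ℕ)),
      (∀ A ∈ H, ∃ n : ℕ, ∀ m, n ≤ m → ∃ c, ∀ k, c ≤ k → Nat.pair k m ∈ A) →
      ∃ n : ℕ, ∀ m, n ≤ m → ∃ c, ∀ k, c ≤ k → ∀ A ∈ H, Nat.pair k m ∈ A := by
    intro H
    induction H using Finset.induction_on with
    | empty => exact fun _ => ⟨0, fun m _ => ⟨0, fun k _ A hA => absurd hA (by simp)⟩⟩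
    | @insert a s ha ih =>
      intro hall
      obtain ⟨n₁, h1⟩ := hall a (Finset.mem_insert_self a s)
      obtain ⟨n₂, h2⟩ := ih (fun A hA => hall A (Finset.mem_insert_of_mem hA))
      refine ⟨max n₁ n₂, fun m hm => ?_⟩
      obtain ⟨c₁, hc1⟩ := h1 m (le_trans (le_max_left _ _) hm)
      obtain ⟨c₂, hc2⟩ := h2 m (le_trans (le_max_right _ _) hm)
      refine ⟨max c₁ c₂, fun k hk A hA => ?_⟩
      rcases Finset.mem_insert.1 hA with rfl | hA'
      · exact hc1 k (le_trans (le_max_left _ _) hk)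
      · exact hc2 k (le_trans (le_max_right _ _) hk) A hA'
  obtain ⟨n, hn⟩ := combo G hQ
  obtain ⟨c, hc⟩ := hn n le_rfl
  have hsub : (fun k => Nat.pair k n) '' (Set.Ici c) ⊆ ⋂ A ∈ G, A := by
    rintro x ⟨k, hk, rfl⟩
    exact Set.mem_iInter₂.2 (fun A hA => hc k hk A hA)
  have hinj : Function.Injective (fun k => Nat.pair k n) := by
    intro a b hab
    have := congrArg Nat.unpair hab
    simpa [Nat.unpair_pair] using this
  exact (((Set.Ici_infinite c).image hinj.injOn)).mono hsub

lemma not_refinable (D0 : Set (ℕ → ℕ))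
    (hdom : ∀ f : ℕ → ℕ, ∃ g ∈ D0, EvDominates g f) :
    ¬ LinearlyRefinable (Fam D0) := by
  rintro ⟨r, hr, _hinf, hcomp⟩
  -- key finiteness lemma, from domination
  have keyfin : ∀ X : Set ℕ, X.Infinite → (∀ n, (X \ VS n).Finite) →
      ∃ d ∈ D0, (X ∩ AS (gD d)).Finite := by
    intro X hXinf hEsc
    have hlow : ∀ m : ℕ, ({x ∈ X | (Nat.unpair x).2 < m}).Finite := by
      intro m
      apply (hEsc m).subset
      rintro x ⟨hx1, hx2⟩
      exact ⟨hx1, fun hv => absurd hv.2 (by omega)⟩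
    obtain ⟨d, hd, hdg⟩ :=
      hdom (fun i => ((hlow (i + 2)).toFinset.sup (fun x => (Nat.unpair x).1)))
    rw [EvDominates, Filter.eventually_atTop] at hdg
    obtain ⟨M, hM⟩ := hdg
    refine ⟨d, hd, (hlow (M + 2)).subset ?_⟩
    rintro x ⟨hx, hxa⟩
    refine ⟨hx, ?_⟩
    by_contra hge
    push_neg at hge
    have hxa' : (Nat.unpair x).2 ≤ gD d (Nat.unpair x).1 := hxa
    set k := (Nat.unpair x).1 with hk
    set m := (Nat.unpair x).2 with hm
    have h1 : dhat d (m - 1) < k := by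
      apply gD_lt d k (m - 1)
      have : m - 1 + 1 = m := by omega
      rw [this]
      exact hxa'
    have h2 : d (m - 1) ≤ dhat d (m - 1) := d_le_dhat d (m - 1)
    have h3 : (hlow ((m - 1) + 2)).toFinset.sup (fun x => (Nat.unpair x).1) ≤ d (m - 1) :=
      hM (m - 1) (by omega)
    have h4 : k ≤ (hlow ((m - 1) + 2)).toFinset.sup (fun x => (Nat.unpair x).1) := by
      apply Finset.le_sup (f := fun x => (Nat.unpair x).1)
      rw [Set.Finite.mem_toFinset]
      exact ⟨hx, by omega⟩
    omega
  have hVmem : ∀ n, VS n ∈ Fam D0 := fun n => Or.inr ⟨n, rfl⟩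
  have hAmem : ∀ d ∈ D0, AS (gD d) ∈ Fam D0 := fun d hd => Or.inl ⟨d, hd, rfl⟩
  -- step 1 : no chain element "escapes"
  have step1 : ∀ A ∈ Fam D0, ¬ (∀ n, ((r A) \ VS n).Finite) := by
    intro A hA hEsc
    obtain ⟨d, hd, hfin⟩ := keyfin (r A) (hr A hA).2 hEsc
    have hY := hr _ (hAmem d hd)
    rcases hcomp (r A) ⟨A, hA, rfl⟩ (r (AS (gD d))) ⟨_, hAmem d hd, rfl⟩ with h | h
    · apply (hr A hA).2
      apply (h.union hfin).subset
      intro x hx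
      by_cases hxy : x ∈ r (AS (gD d))
      · exact Or.inr ⟨hx, hY.1 hxy⟩
      · exact Or.inl ⟨hx, hxy⟩
    · apply hY.2
      apply (h.union hfin).subset
      intro x hx
      by_cases hxx : x ∈ r A
      · exact Or.inr ⟨hxx, hY.1 hx⟩
      · exact Or.inl ⟨hx, hxx⟩
  -- step 2 : dichotomy
  have step2 : ∀ A ∈ Fam D0, ∃ n₀ : ℕ, ∀ j, n₀ ≤ j → StarSubset (r (VS j)) (r A) := by
    intro A hA
    have hne := step1 A hA
    push_neg at hne
    obtain ⟨n₀, hn₀⟩ := hne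
    refine ⟨n₀, fun j hj => ?_⟩
    rcases hcomp (r A) ⟨A, hA, rfl⟩ (r (VS j)) ⟨_, hVmem j, rfl⟩ with h | h
    · exfalso
      apply hn₀
      apply h.subset
      rintro x ⟨hx1, hx2⟩
      exact ⟨hx1, fun hxv => hx2 (VS_anti hj ((hr _ (hVmem j)).1 hxv))⟩
    · exact h
  choose N hN using fun n => step2 (VS n) (hVmem n)
  -- the diagonal sequence of indices
  let jseq : ℕ → ℕ := fun i => Nat.rec 0 (fun _ prev => max (N prev) prev + 1) i
  have hjsucc : ∀ i, jseq (i + 1) = max (N (jseq i)) (jseq i) + 1 := fun i => rfl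
  have hjge : ∀ i, i ≤ jseq i := by
    intro i
    induction i with
    | zero => exact Nat.zero_le _
    | succ i ih =>
      rw [hjsucc]
      have := le_max_right (N (jseq i)) (jseq i)
      omega
  have hstep : ∀ i, StarSubset (r (VS (jseq (i + 1)))) (r (VS (jseq i))) := by
    intro i
    apply hN (jseq i)
    rw [hjsucc]
    have := le_max_left (N (jseq i)) (jseq i)
    omega
  have hchain : ∀ l i, l ≤ i → StarSubset (r (VS (jseq i))) (r (VS (jseq l))) := by
    intro l i
    induction i with
    | zero =>
      intro h
      have : l = 0 := by omega
      subst this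
      exact ss_refl _
    | succ i ih =>
      intro h
      rcases Nat.lt_or_ge l (i + 1) with h' | h'
      · exact ss_trans (hstep i) (ih (by omega))
      · have : l = i + 1 := by omega
        subst this
        exact ss_refl _
  -- finite intersections along the diagonal sequence
  let T : ℕ → Set ℕ := fun i => ⋂ l ∈ Set.Iic i, r (VS (jseq l))
  have hTinf : ∀ i, (T i).Infinite := by
    intro i
    have hfin : (⋃ l ∈ Set.Iic i, (r (VS (jseq i)) \ r (VS (jseq l)))).Finite :=
      Set.Finite.biUnion (Set.finite_Iic i) (fun l hl => hchain l i hl)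
    apply ((hr _ (hVmem (jseq i))).2.diff hfin).mono
    rintro x ⟨hx1, hx2⟩
    apply Set.mem_iInter₂.2
    intro l hl
    by_contra hc
    exact hx2 (Set.mem_biUnion hl ⟨hx1, hc⟩)
  have hpick : ∀ i b, ∃ y, y ∈ T i ∧ b < y := by
    intro i b
    obtain ⟨y, hy1, hy2⟩ := (hTinf i).exists_gt b
    exact ⟨y, hy1, hy2⟩
  let x : ℕ → ℕ := fun i => Nat.rec (hpick 0 0).choose (fun i xi => (hpick (i + 1) xi).choose) i
  have hx0 : x 0 ∈ T 0 := (hpick 0 0).choose_spec.1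
  have hxsucc : ∀ i, x (i + 1) ∈ T (i + 1) ∧ x i < x (i + 1) :=
    fun i => ⟨(hpick (i + 1) (x i)).choose_spec.1, (hpick (i + 1) (x i)).choose_spec.2⟩
  have hxmem : ∀ i, x i ∈ T i := by
    intro i
    cases i with
    | zero => exact hx0
    | succ i => exact (hxsucc i).1
  have hxmono : StrictMono x := strictMono_nat_of_lt_succ (fun i => (hxsucc i).2)
  have hPinf : (Set.range x).Infinite := Set.infinite_range_of_injective hxmono.injective
  have hPsub : ∀ i, StarSubset (Set.range x) (r (VS (jseq i))) := by
    intro i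
    apply Set.Finite.subset ((Set.finite_Iio i).image x)
    rintro y ⟨⟨l, rfl⟩, hy2⟩
    refine ⟨l, ?_, rfl⟩
    by_contra hl
    rw [Set.mem_Iio, not_lt] at hl
    apply hy2
    exact Set.mem_iInter₂.1 (hxmem l) i (Set.mem_Iic.2 hl)
  have hPesc : ∀ n, ((Set.range x) \ VS n).Finite := by
    intro n
    apply (hPsub n).subset
    rintro y ⟨hy1, hy2⟩
    exact ⟨hy1, fun hc => hy2 (VS_anti (hjge n) ((hr _ (hVmem _)).1 hc))⟩
  obtain ⟨d, hd, hfin⟩ := keyfin (Set.range x) hPinf hPesc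
  obtain ⟨J, hJ⟩ := step2 (AS (gD d)) (hAmem d hd)
  have h5 : StarSubset (r (VS (jseq J))) (r (AS (gD d))) := hJ (jseq J) (hjge J)
  have h6 : StarSubset (Set.range x) (r (AS (gD d))) := ss_trans (hPsub J) h5
  have h7 : StarSubset (Set.range x) (AS (gD d)) := by
    apply h6.subset
    rintro y ⟨hy1, hy2⟩
    exact ⟨hy1, fun hc => hy2 ((hr _ (hAmem d hd)).1 hc)⟩
  apply hPinf
  apply (h7.union hfin).subset
  intro y hy
  by_cases h : y ∈ AS (gD d)
  · exact Or.inr ⟨hy, h⟩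
  · exact Or.inl ⟨hy, h⟩

lemma D0_infinite (D0 : Set (ℕ → ℕ))
    (hdom : ∀ f : ℕ → ℕ, ∃ g ∈ D0, EvDominates g f) : D0.Infinite := by
  by_contra h
  rw [Set.not_infinite] at h
  obtain ⟨g, hg, hdg⟩ := hdom (fun n => h.toFinset.sup (fun g' => g' n) + 1)
  obtain ⟨n, hn⟩ := hdg.exists
  have hle : g n ≤ h.toFinset.sup (fun g' => g' n) :=
    Finset.le_sup (f := fun g' => g' n) (h.mem_toFinset.2 hg)
  have hn2 : h.toFinset.sup (fun g' => g' n) + 1 ≤ g n := hn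
  exact absurd (le_trans hn2 hle) (Nat.not_succ_le_self _)

lemma card_Fam_le (D0 : Set (ℕ → ℕ))
    (hdom : ∀ f : ℕ → ℕ, ∃ g ∈ D0, EvDominates g f) : #(Fam D0) ≤ #D0 := by
  have h1 : #(Fam D0) ≤ #((fun d => AS (gD d)) '' D0) + #(Set.range VS) :=
    Cardinal.mk_union_le _ _
  have h2 : #((fun d => AS (gD d)) '' D0) ≤ #D0 := Cardinal.mk_image_le
  have h3 : #(Set.range VS) ≤ ℵ₀ := le_trans Cardinal.mk_range_le (by simp)
  have hinf : ℵ₀ ≤ #D0 := by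
    have := (D0_infinite D0 hdom).to_subtype
    exact Cardinal.aleph0_le_mk _
  calc #(Fam D0) ≤ #D0 + ℵ₀ := le_trans h1 (add_le_add h2 h3)
    _ = #D0 := Cardinal.add_eq_left hinf hinf

end PStarAux

/-- 𝔭* ≤ 𝔡. -/
theorem stmt9 : pStar ≤ dNum := by
  have hTne : { c | ∃ D : Set (ℕ → ℕ), (∀ f : ℕ → ℕ, ∃ g ∈ D, EvDominates g f) ∧ c = #D }.Nonempty :=
    ⟨#(@Set.univ (ℕ → ℕ)), ⟨Set.univ, fun f => ⟨f, Set.mem_univ f,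
      Filter.Eventually.of_forall (fun n => le_rfl)⟩, rfl⟩⟩
  have hmem : dNum ∈ { c | ∃ D : Set (ℕ → ℕ), (∀ f : ℕ → ℕ, ∃ g ∈ D, EvDominates g f) ∧ c = #D } := by
    rw [dNum]
    exact csInf_mem hTne
  obtain ⟨D0, hdom, hEq⟩ := hmem
  have h1 : pStar ≤ #(PStarAux.Fam D0) := by
    rw [pStar]
    exact csInf_le' ⟨PStarAux.Fam D0, PStarAux.centered_Fam D0,
      PStarAux.not_refinable D0 hdom, rfl⟩
  calc pStar ≤ #(PStarAux.Fam D0) := h1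
    _ ≤ #D0 := PStarAux.card_Fam_le D0 hdom
    _ = dNum := hEq.symm
end

section
/- If 𝔭 < 𝔱 then 𝔭 = 𝔭*. -/
open Cardinal

/-- A family with a pseudo-intersection is linearly refinable. -/
lemma refinable_of_hpi {F : Set (Set ℕ)} (h : HasPseudoIntersection F) :
    LinearlyRefinable F := by
  obtain ⟨A, hAinf, hA⟩ := h
  have hinf : ∀ B ∈ F, (A ∩ B).Infinite := by
    intro B hB
    have h1 : (A \ (A \ B)).Infinite := hAinf.diff (hA B hB)
    have h2 : A \ (A \ B) = A ∩ B := by ext x; simp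
    rwa [h2] at h1
  refine ⟨fun B => A ∩ B, fun B hB => ⟨Set.inter_subset_right, hinf B hB⟩, ?_, ?_⟩
  · rintro X ⟨B, hB, rfl⟩
    exact hinf B hB
  · rintro X ⟨B, hB, rfl⟩ Y ⟨C, hC, rfl⟩
    left
    have hsub : (A ∩ B) \ (A ∩ C) ⊆ A \ C := by
      intro x hx; simp at hx ⊢; tauto
    exact (hA C hC).subset hsub

/-- A minimal-size witness for 𝔭 is not linearly refinable when 𝔭 < 𝔱. -/
lemma not_refinable {F : Set (Set ℕ)} (hnpi : ¬ HasPseudoIntersection F)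
    (hlt : #F < tNum) : ¬ LinearlyRefinable F := by
  rintro ⟨r, hr, hlin⟩
  have hpi : HasPseudoIntersection (r '' F) := by
    by_contra hn
    have : tNum ≤ #(r '' F) := csInf_le' ⟨r '' F, hlin, hn, rfl⟩
    exact absurd (this.trans Cardinal.mk_image_le) (not_le.mpr hlt)
  obtain ⟨A, hAinf, hA⟩ := hpi
  refine hnpi ⟨A, hAinf, fun B hB => ?_⟩
  have h1 : (A \ r B).Finite := hA (r B) ⟨B, hB, rfl⟩
  exact h1.subset (fun x hx => ⟨hx.1, fun hxB => hx.2 ((hr B hB).1 hxB)⟩)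

/-- If 𝔭 < 𝔱 then 𝔭 = 𝔭*. -/
theorem stmt10 (h : pNum < tNum) : pNum = pStar := by
  set S : Set Cardinal :=
    { c | ∃ F : Set (Set ℕ), Centered F ∧ ¬ HasPseudoIntersection F ∧ c = #F } with hS
  have hsub : { c | ∃ F : Set (Set ℕ), Centered F ∧ ¬ LinearlyRefinable F ∧ c = #F } ⊆ S := by
    rintro c ⟨F, hc, hnr, rfl⟩
    exact ⟨F, hc, fun hpi => hnr (refinable_of_hpi hpi), rfl⟩
  rcases Set.eq_empty_or_nonempty S with hemp | hne
  · have h2 : { c | ∃ F : Set (Set ℕ), Centered F ∧ ¬ LinearlyRefinable F ∧ c = #F } = ∅ :=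
      Set.eq_empty_of_subset_empty (hemp ▸ hsub)
    simp only [pNum, pStar, hS] at *
    rw [hemp, h2]
  · obtain ⟨F, hc, hnpi, hF⟩ := csInf_mem hne
    have hmem : pNum ∈ { c | ∃ F : Set (Set ℕ), Centered F ∧ ¬ LinearlyRefinable F ∧ c = #F } := by
      refine ⟨F, hc, not_refinable hnpi ?_, hF⟩
      rw [← hF]; exact h
    refine le_antisymm ?_ (csInf_le' hmem)
    exact le_csInf ⟨pNum, hmem⟩ (fun c hcm => csInf_le' (hsub hcm))
end
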